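/- arXiv:0707.1606 — 3 statements merged into one kernel-verified Lean document; each statement's English description precedes it below -/
import Mathlib

section
/- Under the hypotheses of the previous representation (q^∞ satisfies the backward recursions with q(2:1) > 0), the freezing rates are constant: defining ρ = Φ(1)·q(1:1)/1, one has Φ(n)·q(n:1)/n = ρ for all n ≥ 1, where Φ is defined by Φ(1) = ρ₀ > 0 and the recursion Φ(n)/Φ(n+1) = 1 - q(n+1:1)/(n+1) - 2q(n+1:2;n-1)/(n+1). -/
/-- Under the representation hypotheses (`q^∞` satisfies the backward
recursion (generalqrec1b) and `q(2:1) > 0`), the freezing rates are constant: with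
`Φ(1) = ρ₀ > 0` and `Φ(n)/Φ(n+1) = 1 - q(n+1:1)/(n+1) - 2q(n+1:2;n-1)/(n+1)`, one has
`Φ(n)·q(n:1)/n = Φ(1)·q(1:1)/1 = ρ` for all `n ≥ 1`.  Here `q1 n = q(n:1)` and
`q2 (n+1) = q(n+1:2;n-1)`. -/
theorem freezing_rate_constant (ρ₀ : ℝ) (hρ₀ : 0 < ρ₀) (Φ q1 q2 : ℕ → ℝ)
    (hq1 : ∀ n, 0 ≤ q1 n ∧ q1 n ≤ 1) (hq2 : ∀ n, 0 ≤ q2 n ∧ q2 n ≤ 1)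
    (hsum : ∀ n, q1 n + q2 n ≤ 1)
    (hq21 : 0 < q1 2)
    (hΦ1 : Φ 1 = ρ₀)
    (hΦ : ∀ n : ℕ, 1 ≤ n →
      Φ n / Φ (n + 1) = 1 - q1 (n + 1) / ((n : ℝ) + 1) - 2 * q2 (n + 1) / ((n : ℝ) + 1))
    (hrec1b : ∀ b : ℕ, 1 ≤ b →
      q1 b = ((b : ℝ) / ((b : ℝ) + 1)) * q1 (b + 1)
        + (1 / ((b : ℝ) + 1)) * q1 (b + 1) * q1 b
        + (2 / ((b : ℝ) + 1)) * q2 (b + 1) * q1 b) :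
    ∀ n : ℕ, 1 ≤ n → Φ n * q1 n / (n : ℝ) = Φ 1 * q1 1 / 1 := by
  -- key algebraic reformulation of hrec1b
  have key : ∀ b : ℕ, 1 ≤ b →
      q1 b * (1 - q1 (b + 1) / ((b : ℝ) + 1) - 2 * q2 (b + 1) / ((b : ℝ) + 1))
        = ((b : ℝ) / ((b : ℝ) + 1)) * q1 (b + 1) := by
    intro b hb
    linear_combination hrec1b b hb
  -- positivity of q1 for n ≥ 2
  have hq1pos2 : ∀ b : ℕ, 2 ≤ b → 0 < q1 b := by
    intro b hb
    induction b with
    | zero => omega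
    | succ n ih =>
      rcases Nat.lt_or_ge n 2 with hn | hn
      · interval_cases n
        · omega
        · exact hq21
      · have hq1n := ih hn
        have hkey := key n (by omega)
        by_contra h
        have h0 : q1 (n + 1) = 0 := le_antisymm (not_lt.mp h) (hq1 (n + 1)).1
        rw [h0] at hkey
        norm_num at hkey
        have hn3 : (3 : ℝ) ≤ (n : ℝ) + 1 := by
          have : (2 : ℝ) ≤ (n : ℝ) := by exact_mod_cast hn
          linarith
        have hq2b := (hq2 (n + 1)).2
        have : 2 * q2 (n + 1) / ((n : ℝ) + 1) < 1 := by
          rw [div_lt_one (by linarith)]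
          linarith
        rcases hkey with h' | h' <;> linarith
  -- positivity of q1 1
  have hq11 : 0 < q1 1 := by
    have h := hrec1b 1 (le_refl 1)
    by_contra h0
    have h1 : q1 1 = 0 := le_antisymm (not_lt.mp h0) (hq1 1).1
    rw [h1] at h
    norm_num at h
    nlinarith [hq21]
  have hq1pos : ∀ b : ℕ, 1 ≤ b → 0 < q1 b := by
    intro b hb
    rcases Nat.lt_or_ge b 2 with h | h
    · interval_cases b; exact hq11
    · exact hq1pos2 b h
  -- positivity of the factor
  have hfpos : ∀ b : ℕ, 1 ≤ b →
      0 < 1 - q1 (b + 1) / ((b : ℝ) + 1) - 2 * q2 (b + 1) / ((b : ℝ) + 1) := by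
    intro b hb
    have hkey := key b hb
    have h1 := hq1pos b hb
    have h2 := hq1pos (b + 1) (by omega)
    have hbpos : (0 : ℝ) < (b : ℝ) := by exact_mod_cast hb
    have hrhs : 0 < ((b : ℝ) / ((b : ℝ) + 1)) * q1 (b + 1) := by positivity
    nlinarith
  -- main induction: Φ positive and invariant
  have main : ∀ n : ℕ, 1 ≤ n → 0 < Φ n ∧ Φ n * q1 n / (n : ℝ) = Φ 1 * q1 1 / 1 := by
    intro n hn
    induction n with
    | zero => omega
    | succ m ih =>
      rcases Nat.lt_or_ge m 1 with hm | hm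
      · interval_cases m
        exact ⟨by rw [hΦ1]; exact hρ₀, by norm_num⟩
      · obtain ⟨hΦm, heq⟩ := ih hm
        have hf := hfpos m hm
        have hΦeq := hΦ m hm
        have hΦm1ne : Φ (m + 1) ≠ 0 := by
          intro h
          rw [h, div_zero] at hΦeq
          linarith [hΦeq ▸ hf]
        have hΦmval : Φ m = (1 - q1 (m + 1) / ((m : ℝ) + 1)
            - 2 * q2 (m + 1) / ((m : ℝ) + 1)) * Φ (m + 1) := by
          have h := div_mul_cancel₀ (Φ m) hΦm1ne
          rw [hΦeq] at h
          exact h.symm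
        have hΦm1pos : 0 < Φ (m + 1) := by
          rcases lt_or_gt_of_ne hΦm1ne with h | h
          · nlinarith [hΦmval, hf, h]
          · exact h
        constructor
        · exact hΦm1pos
        · rw [← heq]
          have hmpos : (0 : ℝ) < (m : ℝ) := by exact_mod_cast hm
          have h1 : ((m : ℝ) + 1) ≠ 0 := by positivity
          have hm0 : (m : ℝ) ≠ 0 := ne_of_gt hmpos
          have hΦeq2 : Φ m * ((m : ℝ) + 1)
              = ((m : ℝ) + 1 - q1 (m + 1) - 2 * q2 (m + 1)) * Φ (m + 1) := by
            rw [hΦmval]; field_simp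
          have hkey2 : q1 m * (((m : ℝ) + 1) - q1 (m + 1) - 2 * q2 (m + 1))
              = (m : ℝ) * q1 (m + 1) := by
            have h := key m hm
            field_simp at h
            linarith [h]
          push_cast
          field_simp
          linear_combination (-1 : ℝ) * q1 m * hΦeq2 - Φ (m + 1) * hkey2
  intro n hn
  exact (main n hn).2
end

section
/- The correspondence q^∞ ↦ p between infinite consistent arrays with q(2:1) > 0 (satisfying the backward recursions) and the EPPFs solving Möhle's recursion for all n is injective: if two such arrays q and q' yield the same EPPF p, then q = q'. -/
open scoped Classical

/-- `d(n;k₁,…,k_r;s) = n!/(s!·∏_{j=2}^n (j!)^{l_j} l_j!)`, `l_j = #{i : kᵢ = j}`. -/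
noncomputable def dCoef (n : ℕ) (K : Multiset ℕ) (s : ℕ) : ℝ :=
  (Nat.factorial n : ℝ) /
    ((Nat.factorial s : ℝ) *
      ∏ j ∈ Finset.Icc 2 n,
        (Nat.factorial j : ℝ) ^ (K.count j) * (Nat.factorial (K.count j) : ℝ))

/-- The (finite) collection of multisets `{k₁,…,k_r}` with `r ≥ 1`, all `kᵢ ≥ 2` and
`∑ kᵢ ≤ n`, indexing the collision entries `q(n:k₁,…,k_r;s)` (`s = n - ∑ kᵢ`). -/
def collisionSets (n : ℕ) : Finset (Multiset ℕ) :=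
  (((Finset.Icc 2 n).val.bind fun j => Multiset.replicate n j).powerset.toFinset).filter
    fun K => K ≠ 0 ∧ (∀ k ∈ K, 2 ≤ k) ∧ K.sum ≤ n

/-- Admissible allocations `η = (η₁,…,η_ℓ)` of the multiset `K = {k₁,…,k_r}` to the parts of
the composition `L = (n₁,…,n_ℓ)`: part `i` receives the sub-multiset `η i` and
`∑_{k ∈ η i} k ≤ nᵢ`. -/
def allocations (K : Multiset ℕ) (L : List ℕ) : Finset (Fin L.length → Multiset ℕ) :=
  (Fintype.piFinset fun _ : Fin L.length => K.powerset.toFinset).filter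
    fun η => (∑ i, η i) = K ∧ ∀ i, (η i).sum ≤ L.get i

/-- The right-hand side of Möhle's recursion (generalrec1) for the composition
`L = (n₁,…,n_ℓ)` of `n = ∑ nᵢ`, with coefficients `q1 n = q(n:1)` and
`qc n K = q(n:k₁,…,k_r; n-∑kᵢ)`. -/
noncomputable def moehleRHS (q1 : ℕ → ℝ) (qc : ℕ → Multiset ℕ → ℝ)
    (p : List ℕ → ℝ) (L : List ℕ) : ℝ :=
  q1 L.sum / (L.sum : ℝ) *
      ∑ j ∈ Finset.range L.length, (if L.getD j 0 = 1 then p (L.eraseIdx j) else 0)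
    + ∑ K ∈ collisionSets L.sum, qc L.sum K *
        ∑ η ∈ allocations K L,
          ((∏ i : Fin L.length, dCoef (L.get i) (η i) (L.get i - (η i).sum)) /
              dCoef L.sum K (L.sum - K.sum)) *
            p (List.ofFn fun i : Fin L.length => L.get i - (η i).sum + (η i).card)

/-- Möhle's recursion (generalrec1) at the composition `L`. -/
noncomputable def MoehleRec (q1 : ℕ → ℝ) (qc : ℕ → Multiset ℕ → ℝ)
    (p : List ℕ → ℝ) (L : List ℕ) : Prop :=
  p L = moehleRHS q1 qc p L

/-- The backward consistency recursions (generalqrec1) and (generalqrec1b) for an infinite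
array of probability vectors, written with `qc b K = q(b:k₁,…,k_r;s)` (`s = b - ∑kᵢ`),
the multiset `K` being given through a list `L = (k₁,…,k_r)`. -/
def GeneralQRec (q1 : ℕ → ℝ) (qc : ℕ → Multiset ℕ → ℝ) : Prop :=
  (∀ b : ℕ, 1 ≤ b →
    q1 b = ((b : ℝ) / ((b : ℝ) + 1)) * q1 (b + 1)
      + (1 / ((b : ℝ) + 1)) * q1 (b + 1) * q1 b
      + (2 / ((b : ℝ) + 1)) * qc (b + 1) {2} * q1 b) ∧
  ∀ (b s : ℕ) (L : List ℕ), (∀ k ∈ L, 2 ≤ k) → L ≠ [] → s + L.sum = b →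
    qc b (↑L) =
      (∑ i ∈ Finset.range L.length,
        ((((L.getD i 0 : ℝ) + 1) * ((L.count (L.getD i 0 + 1) : ℝ) + 1)) /
            (((b : ℝ) + 1) * (L.count (L.getD i 0) : ℝ))) *
          qc (b + 1) (↑(L.set i (L.getD i 0 + 1))))
      + (if s = 0 then 0 else
          (2 * ((L.count 2 : ℝ) + 1) / ((b : ℝ) + 1)) *
            qc (b + 1) ((L ++ [2] : List ℕ) : Multiset ℕ))
      + (((s : ℝ) + 1) / ((b : ℝ) + 1)) * qc (b + 1) (↑L)
      + (1 / ((b : ℝ) + 1)) * q1 (b + 1) * qc b (↑L)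
      + (2 / ((b : ℝ) + 1)) * qc (b + 1) {2} * qc b (↑L)

/-!
Möhle's recursion at the composition `1^n` involves no collision (a block of size `≥ 2` does not
fit into a part of size `1`), so it reads `p(1^n) = q(n:1) p(1^(n-1))`. The consistency recursion
propagates `q(2:1) > 0` to all `q(n:1) > 0`, and `p[1] = 1` gives `p(∅), q(1:1) > 0`, so every
`p(1^m)` is positive and `q(n:1)` is determined by `p`.

For a collision `K = {k₁,…,k_r}` of `n`, use the recursion at the composition
`(k₁,…,k_r,1,…,1)` of `n`. A collision `K'` can be allocated to it only if its excess
`∑ (k' - 1)` is at most that of `K`, with equality only for `K' = K`, whose allocation turns the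
composition into `(1,…,1)` and so has positive weight. Induction on the excess identifies `q(n:K)`.
-/

-- the number of blocks that a collision of type `K` removes
def excess (K : Multiset ℕ) : ℕ := (K.map (· - 1)).sum

lemma excess_sum {ι : Type*} (s : Finset ι) (f : ι → Multiset ℕ) :
    excess (∑ i ∈ s, f i) = ∑ i ∈ s, excess (f i) :=
  map_sum (Multiset.sumAddMonoidHom.comp (Multiset.mapAddMonoidHom (· - 1))) f s

lemma excess_coe (L : List ℕ) : excess L = ∑ i : Fin L.length, (L.get i - 1) := by
  simp only [excess, Multiset.map_coe, Multiset.sum_coe, List.get_eq_getElem]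
  exact (Fin.sum_univ_fun_getElem L (· - 1)).symm

lemma excess_add_card {K : Multiset ℕ} (hK : ∀ k ∈ K, 1 ≤ k) :
    excess K + Multiset.card K = K.sum := by
  induction K using Multiset.induction_on with
  | empty => simp [excess]
  | cons a K ih =>
    have ha := hK a (Multiset.mem_cons_self a K)
    have := ih fun k hk => hK k (Multiset.mem_cons_of_mem hk)
    simp only [excess, Multiset.map_cons, Multiset.sum_cons, Multiset.card_cons] at this ⊢
    omega

lemma excess_pos {K : Multiset ℕ} (h0 : K ≠ 0) (h2 : ∀ k ∈ K, 2 ≤ k) : 0 < excess K := by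
  have hcard := Multiset.card_pos.2 h0
  have hsum : Multiset.card K • 2 ≤ K.sum := Multiset.card_nsmul_le_sum h2
  have := excess_add_card fun k hk => (h2 k hk).trans' one_le_two
  rw [smul_eq_mul] at hsum
  omega

lemma excess_le_of_sum_le {m : Multiset ℕ} {k : ℕ} (hm : ∀ x ∈ m, 2 ≤ x) (hk : 1 ≤ k)
    (hs : m.sum ≤ k) : excess m ≤ k - 1 := by
  have hadd := excess_add_card fun x hx => (hm x hx).trans' one_le_two
  rcases eq_or_ne m 0 with rfl | h0
  · simp [excess]
  · have hcard := Multiset.card_pos.2 h0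
    omega

lemma eq_filter_singleton_of_excess_eq {m : Multiset ℕ} {k : ℕ} (hm : ∀ x ∈ m, 2 ≤ x)
    (hk : 1 ≤ k) (hs : m.sum ≤ k) (he : excess m = k - 1) :
    m = ({k} : Multiset ℕ).filter (2 ≤ ·) := by
  have hadd := excess_add_card fun x hx => (hm x hx).trans' one_le_two
  rcases eq_or_ne m 0 with rfl | h0
  · simp only [excess, Multiset.map_zero, Multiset.sum_zero] at he
    simp [Multiset.filter_singleton]
    omega
  · have hpos := excess_pos h0 hm
    have hcard : Multiset.card m = 1 := by have := Multiset.card_pos.2 h0; omega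
    obtain ⟨a, rfl⟩ := Multiset.card_eq_one.1 hcard
    have ha := hm a (Multiset.mem_singleton_self a)
    obtain rfl : a = k := by simp [excess] at he; omega
    simp [Multiset.filter_singleton, ha]

lemma mem_collisionSets {n : ℕ} {K : Multiset ℕ} :
    K ∈ collisionSets n ↔ K ≠ 0 ∧ (∀ k ∈ K, 2 ≤ k) ∧ K.sum ≤ n := by
  refine Finset.mem_filter.trans ⟨fun h => h.2, fun h => ⟨?_, h⟩⟩
  obtain ⟨-, h2, hn⟩ := h
  rw [Multiset.mem_toFinset, Multiset.mem_powerset, Multiset.le_iff_count]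
  intro j
  by_cases hj : j ∈ K
  · have hjn : j ≤ n := (Multiset.le_sum_of_mem hj).trans hn
    have hcard : Multiset.card K • 1 ≤ K.sum :=
      Multiset.card_nsmul_le_sum fun k hk => (h2 k hk).trans' one_le_two
    have hjS : j ∈ (Finset.Icc 2 n).val := Finset.mem_Icc.2 ⟨h2 j hj, hjn⟩
    calc Multiset.count j K ≤ Multiset.card K := Multiset.count_le_card j K
      _ ≤ n := by rw [smul_eq_mul, mul_one] at hcard; omega
      _ = Multiset.count j (Multiset.replicate n j) := (Multiset.count_replicate_self j n).symm
      _ ≤ _ := Multiset.count_le_of_le j (Multiset.le_bind _ hjS)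
  · simp [Multiset.count_eq_zero_of_notMem hj]

lemma mem_allocations {K : Multiset ℕ} {L : List ℕ} {η : Fin L.length → Multiset ℕ} :
    η ∈ allocations K L ↔ (∑ i, η i) = K ∧ ∀ i, (η i).sum ≤ L.get i := by
  refine Finset.mem_filter.trans ⟨fun h => h.2, fun h => ⟨?_, h⟩⟩
  rw [Fintype.mem_piFinset]
  intro i
  rw [Multiset.mem_toFinset, Multiset.mem_powerset, ← h.1]
  exact Finset.single_le_sum (fun _ _ => Multiset.zero_le _) (Finset.mem_univ i)

section Allocations

variable {K : Multiset ℕ} {L : List ℕ} {η : Fin L.length → Multiset ℕ}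

lemma le_of_mem_allocations (hη : η ∈ allocations K L) (i : Fin L.length) : η i ≤ K :=
  (mem_allocations.1 hη).1 ▸ Finset.single_le_sum (fun _ _ => Multiset.zero_le _)
    (Finset.mem_univ i)

lemma excess_apply_le_of_mem_allocations (hη : η ∈ allocations K L) (hL : ∀ x ∈ L, 1 ≤ x)
    (hK : ∀ k ∈ K, 2 ≤ k) (i : Fin L.length) : excess (η i) ≤ L.get i - 1 :=
  excess_le_of_sum_le (fun x hx => hK x (Multiset.mem_of_le (le_of_mem_allocations hη i) hx))
    (hL _ (List.get_mem L i)) ((mem_allocations.1 hη).2 i)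

lemma excess_le_of_mem_allocations (hη : η ∈ allocations K L) (hL : ∀ x ∈ L, 1 ≤ x)
    (hK : ∀ k ∈ K, 2 ≤ k) : excess K ≤ excess L := by
  rw [← (mem_allocations.1 hη).1, excess_sum, excess_coe]
  exact Finset.sum_le_sum fun i _ => excess_apply_le_of_mem_allocations hη hL hK i

lemma sum_filter_singleton_get (L : List ℕ) (P : ℕ → Prop) [DecidablePred P] :
    ∑ i : Fin L.length, ({L.get i} : Multiset ℕ).filter P = (L : Multiset ℕ).filter P := by
  simp only [List.get_eq_getElem]
  rw [Fin.sum_univ_fun_getElem L fun x => ({x} : Multiset ℕ).filter P]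
  induction L with
  | nil => simp
  | cons a L ih =>
    rw [List.map_cons, List.sum_cons, ih, ← Multiset.cons_coe, Multiset.filter_cons,
      Multiset.filter_singleton, Multiset.empty_eq_zero]

lemma eq_filter_of_mem_allocations_of_excess_eq (hη : η ∈ allocations K L)
    (hL : ∀ x ∈ L, 1 ≤ x) (hK : ∀ k ∈ K, 2 ≤ k) (he : excess K = excess L) :
    K = (L : Multiset ℕ).filter (2 ≤ ·) := by
  obtain ⟨hsum, hle⟩ := mem_allocations.1 hη
  rw [← hsum, excess_sum, excess_coe] at he
  have hblock i : excess (η i) = L.get i - 1 :=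
    (Finset.sum_eq_sum_iff_of_le fun i _ => excess_apply_le_of_mem_allocations hη hL hK i).1 he i
      (Finset.mem_univ i)
  rw [← sum_filter_singleton_get, ← hsum]
  refine Finset.sum_congr rfl fun i _ => eq_filter_singleton_of_excess_eq ?_
    (hL _ (List.get_mem L i)) (hle i) (hblock i)
  exact fun x hx => hK x (Multiset.mem_of_le (le_of_mem_allocations hη i) hx)

lemma filter_mem_allocations (L : List ℕ) :
    (fun i => ({L.get i} : Multiset ℕ).filter (2 ≤ ·)) ∈
      allocations ((L : Multiset ℕ).filter (2 ≤ ·)) L := by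
  refine mem_allocations.2 ⟨sum_filter_singleton_get L _, fun i => ?_⟩
  rw [Multiset.filter_singleton]
  split_ifs <;> simp

lemma ofFn_filter_singleton_get (hL : ∀ x ∈ L, 1 ≤ x) :
    (List.ofFn fun i : Fin L.length => L.get i - (({L.get i} : Multiset ℕ).filter (2 ≤ ·)).sum
      + (({L.get i} : Multiset ℕ).filter (2 ≤ ·)).card) = List.replicate L.length 1 := by
  refine List.eq_replicate_iff.2 ⟨by simp, fun b hb => ?_⟩
  obtain ⟨i, rfl⟩ := List.mem_ofFn.1 hb
  have := hL _ (List.get_mem L i)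
  rw [Multiset.filter_singleton]
  simp only [List.get_eq_getElem] at this ⊢
  split_ifs <;> simp
  omega

end Allocations

lemma dCoef_pos (n : ℕ) (K : Multiset ℕ) (s : ℕ) : 0 < dCoef n K s := by
  unfold dCoef
  positivity

noncomputable def allocWeight (p : List ℕ → ℝ) (L : List ℕ) (K : Multiset ℕ) : ℝ :=
  ∑ η ∈ allocations K L,
    ((∏ i : Fin L.length, dCoef (L.get i) (η i) (L.get i - (η i).sum)) /
        dCoef L.sum K (L.sum - K.sum)) *
      p (List.ofFn fun i : Fin L.length => L.get i - (η i).sum + (η i).card)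

section AllocWeight

variable {p : List ℕ → ℝ} {L : List ℕ} {K : Multiset ℕ}

lemma allocWeight_pos (hp : ∀ L, 0 ≤ p L) {η : Fin L.length → Multiset ℕ}
    (hη : η ∈ allocations K L)
    (hpη : 0 < p (List.ofFn fun i : Fin L.length => L.get i - (η i).sum + (η i).card)) :
    0 < allocWeight p L K := by
  have hcoef (η : Fin L.length → Multiset ℕ) :
      0 < (∏ i : Fin L.length, dCoef (L.get i) (η i) (L.get i - (η i).sum)) /
        dCoef L.sum K (L.sum - K.sum) :=
    div_pos (Finset.prod_pos fun _ _ => dCoef_pos _ _ _) (dCoef_pos _ _ _)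
  exact Finset.sum_pos' (fun η _ => mul_nonneg (hcoef η).le (hp _))
    ⟨η, hη, mul_pos (hcoef η) hpη⟩

lemma allocWeight_filter_pos (hp : ∀ L, 0 ≤ p L) (hL : ∀ x ∈ L, 1 ≤ x)
    (hpL : 0 < p (List.replicate L.length 1)) :
    0 < allocWeight p L ((L : Multiset ℕ).filter (2 ≤ ·)) :=
  allocWeight_pos hp (filter_mem_allocations L) (by rwa [ofFn_filter_singleton_get hL])

lemma excess_le_of_allocWeight_ne_zero (h : allocWeight p L K ≠ 0) (hL : ∀ x ∈ L, 1 ≤ x)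
    (hK : ∀ k ∈ K, 2 ≤ k) : excess K ≤ excess L := by
  obtain ⟨η, hη, -⟩ := Finset.exists_ne_zero_of_sum_ne_zero h
  exact excess_le_of_mem_allocations hη hL hK

lemma eq_filter_of_allocWeight_ne_zero (h : allocWeight p L K ≠ 0) (hL : ∀ x ∈ L, 1 ≤ x)
    (hK : ∀ k ∈ K, 2 ≤ k) (he : excess K = excess L) :
    K = (L : Multiset ℕ).filter (2 ≤ ·) := by
  obtain ⟨η, hη, -⟩ := Finset.exists_ne_zero_of_sum_ne_zero h
  exact eq_filter_of_mem_allocations_of_excess_eq hη hL hK he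

end AllocWeight

section Moehle

variable {q1 q1' : ℕ → ℝ} {qc qc' : ℕ → Multiset ℕ → ℝ} {p : List ℕ → ℝ}

lemma moehleRHS_eq_add_sum_allocWeight (L : List ℕ) :
    moehleRHS q1 qc p L = q1 L.sum / (L.sum : ℝ) *
      ∑ j ∈ Finset.range L.length, (if L.getD j 0 = 1 then p (L.eraseIdx j) else 0)
      + ∑ K ∈ collisionSets L.sum, qc L.sum K * allocWeight p L K := rfl

lemma sum_sub_mul_allocWeight_eq_zero {L : List ℕ} (hM : MoehleRec q1 qc p L)
    (hM' : MoehleRec q1' qc' p L) (hq1 : q1 L.sum = q1' L.sum) :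
    ∑ K ∈ collisionSets L.sum, (qc L.sum K - qc' L.sum K) * allocWeight p L K = 0 := by
  rw [MoehleRec, moehleRHS_eq_add_sum_allocWeight] at hM hM'
  simp only [sub_mul, Finset.sum_sub_distrib]
  rw [hq1] at hM
  linarith

lemma allocations_replicate_one {K : Multiset ℕ} (h0 : K ≠ 0) (h2 : ∀ k ∈ K, 2 ≤ k) (m : ℕ) :
    allocations K (List.replicate m 1) = ∅ := by
  refine Finset.eq_empty_of_forall_notMem fun η hη => ?_
  have hle := excess_le_of_mem_allocations hη (by simp) h2
  have hzero : excess (List.replicate m 1 : Multiset ℕ) = 0 := by simp [excess]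
  exact (excess_pos h0 h2).ne' (Nat.eq_zero_of_le_zero (hzero ▸ hle))

lemma moehleRHS_replicate_one (n : ℕ) :
    moehleRHS q1 qc p (List.replicate (n + 1) 1) = q1 (n + 1) * p (List.replicate n 1) := by
  set L := List.replicate (n + 1) 1
  have hcoll : ∑ K ∈ collisionSets (n + 1), qc (n + 1) K * allocWeight p L K = 0 :=
    Finset.sum_eq_zero fun K hK => by
      obtain ⟨h0, h2, -⟩ := mem_collisionSets.1 hK
      rw [allocWeight, allocations_replicate_one h0 h2, Finset.sum_empty, mul_zero]
  have hsingle (j : ℕ) (hj : j ∈ Finset.range (n + 1)) :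
      (if L.getD j 0 = 1 then p (L.eraseIdx j) else 0) = p (List.replicate n 1) := by
    replace hj := Finset.mem_range.1 hj
    rw [List.getD_eq_getElem _ _ (by simpa [L] using hj), List.getElem_replicate, if_pos rfl,
      List.eraseIdx_replicate, if_pos hj, Nat.add_sub_cancel]
  rw [moehleRHS_eq_add_sum_allocWeight, List.sum_replicate, smul_eq_mul, mul_one, hcoll,
    add_zero, List.length_replicate, Finset.sum_congr rfl hsingle, Finset.sum_const,
    Finset.card_range, nsmul_eq_mul]
  field_simp

lemma p_replicate_succ {n : ℕ} (hM : MoehleRec q1 qc p (List.replicate (n + 1) 1)) :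
    p (List.replicate (n + 1) 1) = q1 (n + 1) * p (List.replicate n 1) :=
  hM.trans (moehleRHS_replicate_one n)

lemma qc_singleton_two_le_one {m : ℕ} (hm : 2 ≤ m) (hq1 : 0 ≤ q1 m) (hqc : ∀ K, 0 ≤ qc m K)
    (hqsum : q1 m + ∑ K ∈ collisionSets m, qc m K = 1) : qc m {2} ≤ 1 := by
  have hmem : ({2} : Multiset ℕ) ∈ collisionSets m :=
    mem_collisionSets.2 ⟨by simp, by simp, by simpa using hm⟩
  have := Finset.single_le_sum (fun K _ => hqc K) hmem
  linarith

lemma q1_pos_of_generalQRec (hcons : GeneralQRec q1 qc) (hq1 : ∀ n, 0 ≤ q1 n)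
    (hqc2 : ∀ n, 2 ≤ n → qc n {2} ≤ 1) (hq21 : 0 < q1 2) {n : ℕ} (hn : 2 ≤ n) : 0 < q1 n := by
  induction n, hn using Nat.le_induction with
  | base => exact hq21
  | succ n hn ih =>
    -- if `q(n+1:1) = 0`, the recursion reads `q(n:1) = 2 q(n+1:{2}) q(n:1) / (n+1) < q(n:1)`
    refine (hq1 (n + 1)).lt_of_ne fun h => ?_
    have hrec := hcons.1 n (by omega)
    rw [← h] at hrec
    have hq := hqc2 (n + 1) (by omega)
    have hn' : (2 : ℝ) ≤ n := by exact_mod_cast hn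
    field_simp at hrec
    nlinarith

lemma p_replicate_pos (hp : ∀ L, 0 ≤ p L) (hone : p [1] = 1)
    (hM : ∀ n, MoehleRec q1 qc p (List.replicate (n + 1) 1)) (hq1 : ∀ n, 2 ≤ n → 0 < q1 n)
    (m : ℕ) : 0 < p (List.replicate m 1) := by
  have h1 : 0 < q1 1 * p [] := by
    have := p_replicate_succ (hM 0)
    simp only [zero_add, List.replicate_one, List.replicate_zero, hone] at this
    exact this ▸ one_pos
  have hq11 : 0 < q1 1 := pos_of_mul_pos_left h1 (hp [])
  induction m with
  | zero => exact pos_of_mul_pos_right h1 hq11.le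
  | succ m ih =>
    rw [p_replicate_succ (hM m)]
    refine mul_pos ?_ ih
    rcases m with _ | m
    · exact hq11
    · exact hq1 _ (by omega)

lemma q1_eq_of_moehleRec {n : ℕ} (hpos : 0 < p (List.replicate n 1))
    (hM : MoehleRec q1 qc p (List.replicate (n + 1) 1))
    (hM' : MoehleRec q1' qc' p (List.replicate (n + 1) 1)) : q1 (n + 1) = q1' (n + 1) :=
  mul_right_cancel₀ hpos.ne' ((p_replicate_succ hM).symm.trans (p_replicate_succ hM'))

end Moehle

noncomputable def blockComposition (K : Multiset ℕ) (n : ℕ) : List ℕ :=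
  K.toList ++ List.replicate (n - K.sum) 1

section BlockComposition

variable {K : Multiset ℕ} {n : ℕ}

lemma coe_blockComposition :
    (blockComposition K n : Multiset ℕ) = K + Multiset.replicate (n - K.sum) 1 := by
  rw [blockComposition, ← Multiset.coe_add, Multiset.coe_toList, Multiset.coe_replicate]

lemma sum_blockComposition (hn : K.sum ≤ n) : (blockComposition K n).sum = n := by
  simp [blockComposition]
  omega

lemma one_le_of_mem_blockComposition (hK : ∀ k ∈ K, 2 ≤ k) :
    ∀ x ∈ blockComposition K n, 1 ≤ x := by
  intro x hx
  rw [← Multiset.mem_coe, coe_blockComposition, Multiset.mem_add] at hx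
  rcases hx with hx | hx
  · exact (hK x hx).trans' one_le_two
  · rw [Multiset.eq_of_mem_replicate hx]

lemma blockComposition_ne_nil (h0 : K ≠ 0) : blockComposition K n ≠ [] := by
  simp [blockComposition, h0]

lemma filter_blockComposition (hK : ∀ k ∈ K, 2 ≤ k) :
    (blockComposition K n : Multiset ℕ).filter (2 ≤ ·) = K := by
  rw [coe_blockComposition, Multiset.filter_add, Multiset.filter_eq_self.2 hK]
  simp only [add_eq_left, Multiset.filter_eq_nil]
  intro a ha
  rw [Multiset.eq_of_mem_replicate ha]
  omega

lemma excess_blockComposition : excess (blockComposition K n) = excess K := by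
  simp [coe_blockComposition, excess]

end BlockComposition

theorem qc_eq_of_moehleRec {q1 q1' : ℕ → ℝ} {qc qc' : ℕ → Multiset ℕ → ℝ} {p : List ℕ → ℝ}
    (hp : ∀ L, 0 ≤ p L) (hpos : ∀ m, 0 < p (List.replicate m 1)) {n : ℕ}
    (hq1 : q1 n = q1' n) (hM : ∀ L : List ℕ, (∀ x ∈ L, 1 ≤ x) → L ≠ [] → MoehleRec q1 qc p L)
    (hM' : ∀ L : List ℕ, (∀ x ∈ L, 1 ≤ x) → L ≠ [] → MoehleRec q1' qc' p L)
    {K : Multiset ℕ} (hK : K ∈ collisionSets n) : qc n K = qc' n K := by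
  induction hm : excess K using Nat.strong_induction_on generalizing K with
  | _ m ih =>
  obtain ⟨h0, h2, hn⟩ := mem_collisionSets.1 hK
  set L := blockComposition K n
  have hL1 : ∀ x ∈ L, 1 ≤ x := one_le_of_mem_blockComposition h2
  have hLsum : L.sum = n := sum_blockComposition hn
  have hLK : (L : Multiset ℕ).filter (2 ≤ ·) = K := filter_blockComposition h2
  have hsum := sum_sub_mul_allocWeight_eq_zero (hM L hL1 (blockComposition_ne_nil h0))
    (hM' L hL1 (blockComposition_ne_nil h0)) (hLsum ▸ hq1)
  rw [hLsum, Finset.sum_eq_single_of_mem K hK ?off] at hsum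
  case off =>
    intro K' hK' hne
    by_cases hw : allocWeight p L K' = 0
    · rw [hw, mul_zero]
    have h2' := (mem_collisionSets.1 hK').2.1
    have hlt : excess K' < m := by
      rw [← hm, ← excess_blockComposition (K := K) (n := n)]
      exact (excess_le_of_allocWeight_ne_zero hw hL1 h2').lt_of_ne
        fun he => hne (hLK ▸ eq_filter_of_allocWeight_ne_zero hw hL1 h2' he)
    rw [ih _ hlt hK' rfl, sub_self, zero_mul]
  have hpos : 0 < allocWeight p L K := hLK ▸ allocWeight_filter_pos hp hL1 (hpos _)
  exact sub_eq_zero.1 ((mul_eq_zero.1 hsum).resolve_right hpos.ne')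

theorem q_to_p_injective_general (q1 q1' : ℕ → ℝ) (qc qc' : ℕ → Multiset ℕ → ℝ) (p : List ℕ → ℝ)
    (hq1 : ∀ n, 0 ≤ q1 n ∧ q1 n ≤ 1) (hqc : ∀ n K, 0 ≤ qc n K)
    (hqsum : ∀ n : ℕ, 1 ≤ n → q1 n + ∑ K ∈ collisionSets n, qc n K = 1)
    (hcons : GeneralQRec q1 qc)
    (hq21 : 0 < q1 2)
    (hnn : ∀ L : List ℕ, 0 ≤ p L)
    (hone : p [1] = 1)
    (hM : ∀ L : List ℕ, (∀ x ∈ L, 1 ≤ x) → L ≠ [] → MoehleRec q1 qc p L)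
    (hM' : ∀ L : List ℕ, (∀ x ∈ L, 1 ≤ x) → L ≠ [] → MoehleRec q1' qc' p L) :
    (∀ n : ℕ, 1 ≤ n → q1 n = q1' n) ∧
    ∀ (n : ℕ) (K : Multiset ℕ), K ≠ 0 → (∀ k ∈ K, 2 ≤ k) → K.sum ≤ n →
      qc n K = qc' n K := by
  have hrep (n : ℕ) : ∀ x ∈ List.replicate (n + 1) 1, 1 ≤ x := by simp
  have hq1pos : ∀ n, 2 ≤ n → 0 < q1 n :=
    fun n hn => q1_pos_of_generalQRec hcons (fun n => (hq1 n).1)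
      (fun m hm => qc_singleton_two_le_one hm (hq1 m).1 (hqc m) (hqsum m (by omega))) hq21 hn
  have hpos : ∀ m, 0 < p (List.replicate m 1) :=
    p_replicate_pos hnn hone (fun n => hM _ (hrep n) (by simp)) hq1pos
  have hq1eq : ∀ n, 1 ≤ n → q1 n = q1' n := by
    intro n hn
    obtain ⟨n, rfl⟩ := Nat.exists_eq_add_of_le' hn
    exact q1_eq_of_moehleRec (hpos n) (hM _ (hrep n) (by simp)) (hM' _ (hrep n) (by simp))
  refine ⟨hq1eq, fun n K h0 h2 hn => ?_⟩
  have hK : K ∈ collisionSets n := mem_collisionSets.2 ⟨h0, h2, hn⟩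
  have hn1 : 1 ≤ n := by
    obtain ⟨k, hk⟩ := Multiset.exists_mem_of_ne_zero h0
    exact (h2 k hk).trans' one_le_two |>.trans ((Multiset.le_sum_of_mem hk).trans hn)
  exact qc_eq_of_moehleRec hnn hpos (hq1eq n hn1) hM hM' hK

/-- The correspondence `q^∞ ↦ p` between infinite consistent arrays with
`q(2:1) > 0` (satisfying the backward recursions) and the EPPFs solving Möhle's recursion for
all `n` is injective: if two such arrays yield the same EPPF `p`, they coincide (on the
admissible entries). -/
theorem q_to_p_injective (q1 q1' : ℕ → ℝ) (qc qc' : ℕ → Multiset ℕ → ℝ) (p : List ℕ → ℝ)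
    (hq1 : ∀ n, 0 ≤ q1 n ∧ q1 n ≤ 1) (hqc : ∀ n K, 0 ≤ qc n K)
    (hq1' : ∀ n, 0 ≤ q1' n ∧ q1' n ≤ 1) (hqc' : ∀ n K, 0 ≤ qc' n K)
    (hqsum : ∀ n : ℕ, 1 ≤ n → q1 n + ∑ K ∈ collisionSets n, qc n K = 1)
    (hqsum' : ∀ n : ℕ, 1 ≤ n → q1' n + ∑ K ∈ collisionSets n, qc' n K = 1)
    (hcons : GeneralQRec q1 qc) (hcons' : GeneralQRec q1' qc')
    (hq21 : 0 < q1 2) (hq21' : 0 < q1' 2)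
    (hnn : ∀ L : List ℕ, 0 ≤ p L)
    (hsymm : ∀ L L' : List ℕ, L.Perm L' → p L = p L')
    (hone : p [1] = 1)
    (hadd : ∀ L : List ℕ, (∀ x ∈ L, 1 ≤ x) → L ≠ [] →
      p L = p (L ++ [1]) + ∑ i ∈ Finset.range L.length, p (L.set i (L.getD i 0 + 1)))
    (hM : ∀ L : List ℕ, (∀ x ∈ L, 1 ≤ x) → L ≠ [] → MoehleRec q1 qc p L)
    (hM' : ∀ L : List ℕ, (∀ x ∈ L, 1 ≤ x) → L ≠ [] → MoehleRec q1' qc' p L) :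
    (∀ n : ℕ, 1 ≤ n → q1 n = q1' n) ∧
    ∀ (n : ℕ) (K : Multiset ℕ), K ≠ 0 → (∀ k ∈ K, 2 ≤ k) → K.sum ≤ n →
      qc n K = qc' n K :=
  q_to_p_injective_general q1 q1' qc qc' p hq1 hqc hqsum hcons hq21 hnn hone hM hM'
end

section
/- If Π_n is an exchangeable random partition of [n] and Π_n' is obtained from Π_n by one step of the sample-and-add operation SA_n, then Π_n' is exchangeable. -/
/-!
Relabelling the balls by `g` commutes with each move of `SA_n`: sending ball `g b` of `gP` to
a singleton gives `g` applied to the result for `b` in `P`, and `g` acts bijectively on the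
sampling configurations of each collision multiset `K`, compatibly with the merge move.
Hence the kernel is invariant, `T(gP, gP') = T(P, P')`, and substituting `P ↦ gP` in
`∑_P μ(P) T(P, gP')` together with `μ(gP) = μ(P)` gives the claim.
-/

open scoped Classical

def IsPartitionOf (n : ℕ) (P : Finset (Finset (Fin n))) : Prop :=
  (∅ : Finset (Fin n)) ∉ P ∧
  (∀ A ∈ P, ∀ B ∈ P, A ≠ B → Disjoint A B) ∧
  ∀ x : Fin n, ∃ A ∈ P, x ∈ A

/-- The `q(n:1)`-move of the sample-and-add operation: remove the ball `b` from its box and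
put it in a new singleton box (deleting any box left empty). -/
def addSingleton {n : ℕ} (P : Finset (Finset (Fin n))) (b : Fin n) :
    Finset (Finset (Fin n)) :=
  insert {b} ((P.image fun A => A.erase b).erase ∅)

/-- Destination map of a collision move: a ball lying in the sampled set `A i` moves to the
(box of the) marked ball `t i`; other balls stay put. -/
noncomputable def dest {n : ℕ} (A : Fin n → Finset (Fin n)) (t : Fin n → Fin n)
    (x : Fin n) : Fin n :=
  if h : ∃ i, x ∈ A i then t h.choose else x

/-- Result of the collision move with sampled sets `A` and marked balls `t`: every ball `x`
joins the box containing `dest A t x`; empty boxes are deleted. -/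
noncomputable def mergeMove {n : ℕ} (P : Finset (Finset (Fin n)))
    (A : Fin n → Finset (Fin n)) (t : Fin n → Fin n) : Finset (Finset (Fin n)) :=
  (P.image fun B => Finset.univ.filter fun x => dest A t x ∈ B).erase ∅

/-- Configurations of the sampling step for the collision multiset `K = {k₁,…,k_r}` (listed
in increasing order): pairwise disjoint sampled sets `A i` of sizes `kᵢ - 1` (`i < r`),
together with `r` distinct marked balls `t i` outside all sampled sets.  (Coordinates with
index `≥ r` are fixed to dummy values.)  Uniform sequential sampling without replacement
induces the uniform distribution on these configurations. -/
noncomputable def saConfigs (n : ℕ) (hn : 0 < n) (K : Multiset ℕ) :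
    Finset ((Fin n → Finset (Fin n)) × (Fin n → Fin n)) :=
  Finset.univ.filter fun c =>
    (∀ i : Fin n, (i : ℕ) < (K.sort (· ≤ ·)).length →
      (c.1 i).card = (K.sort (· ≤ ·)).getD (i : ℕ) 0 - 1) ∧
    (∀ i : Fin n, (K.sort (· ≤ ·)).length ≤ (i : ℕ) → c.1 i = ∅ ∧ c.2 i = ⟨0, hn⟩) ∧
    (∀ i j : Fin n, i ≠ j → Disjoint (c.1 i) (c.1 j)) ∧
    (∀ i j : Fin n, (i : ℕ) < (K.sort (· ≤ ·)).length →
      (j : ℕ) < (K.sort (· ≤ ·)).length → c.2 i = c.2 j → i = j) ∧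
    ∀ i : Fin n, (i : ℕ) < (K.sort (· ≤ ·)).length → ∀ j : Fin n, c.2 i ∉ c.1 j

/-- Transition probability of the sample-and-add Markov chain `SA_n` from the partition `P`
to `P'`, for the probability vector with entries `q1n = q(n:1)` and `qcn K = q(n:K;s)`:
with probability `q(n:1)` a uniform ball is moved to a new singleton box, and with
probability `q(n:K;s)` a uniform sampling configuration for `K` is chosen and the sampled
sets are added to the boxes of the marked balls. -/
noncomputable def saT (n : ℕ) (hn : 0 < n) (q1n : ℝ) (qcn : Multiset ℕ → ℝ)
    (P P' : Finset (Finset (Fin n))) : ℝ :=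
  q1n * (1 / (n : ℝ)) * ∑ b : Fin n, (if P' = addSingleton P b then 1 else 0)
    + ∑ K ∈ collisionSets n,
        qcn K * (1 / ((saConfigs n hn K).card : ℝ)) *
          ∑ c ∈ saConfigs n hn K, (if P' = mergeMove P c.1 c.2 then 1 else 0)

/-- The action of a permutation `g` of `[n]` on a partition of `[n]`. -/
def permPart {n : ℕ} (g : Equiv.Perm (Fin n)) (P : Finset (Finset (Fin n))) :
    Finset (Finset (Fin n)) :=
  P.image fun A => A.image g

section SampleAndAdd

open Function

variable {n : ℕ}

lemma permPart_mul (g h : Equiv.Perm (Fin n)) (P : Finset (Finset (Fin n))) :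
    permPart (g * h) P = permPart g (permPart h P) := by
  simp [permPart, Finset.image_image, Function.comp_def]

lemma permPart_one (P : Finset (Finset (Fin n))) : permPart 1 P = P := by
  simp [permPart]

def permPartEquiv (g : Equiv.Perm (Fin n)) :
    Finset (Finset (Fin n)) ≃ Finset (Finset (Fin n)) where
  toFun := permPart g
  invFun := permPart g⁻¹
  left_inv P := by rw [← permPart_mul, inv_mul_cancel, permPart_one]
  right_inv P := by rw [← permPart_mul, mul_inv_cancel, permPart_one]

lemma permPart_injective (g : Equiv.Perm (Fin n)) : Function.Injective (permPart g) :=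
  (permPartEquiv g).injective

lemma addSingleton_permPart (g : Equiv.Perm (Fin n)) (P : Finset (Finset (Fin n)))
    (b : Fin n) : addSingleton (permPart g P) (g b) = permPart g (addSingleton P b) := by
  have herase (A : Finset (Fin n)) : (A.image g).erase (g b) = (A.erase b).image g :=
    (Finset.image_erase g.injective A b).symm
  simp only [addSingleton, permPart, Finset.image_insert, Finset.image_singleton,
    Finset.image_erase (Finset.image_injective g.injective), Finset.image_empty,
    Finset.image_image, Function.comp_def, herase]

lemma dest_eq_of_mem {A : Fin n → Finset (Fin n)} (hA : Pairwise (Disjoint on A))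
    (t : Fin n → Fin n) {x : Fin n} {i : Fin n} (hx : x ∈ A i) : dest A t x = t i := by
  have hex : ∃ j, x ∈ A j := ⟨i, hx⟩
  rw [dest, dif_pos hex]
  by_contra hne
  exact Finset.disjoint_left.mp (hA fun h => hne (congrArg t h)) hex.choose_spec hx

lemma dest_eq_self {A : Fin n → Finset (Fin n)} (t : Fin n → Fin n) {x : Fin n}
    (hx : ∀ i, x ∉ A i) : dest A t x = x := by
  rw [dest, dif_neg (not_exists.mpr hx)]

lemma mergeMove_permPart {g : Equiv.Perm (Fin n)} (P : Finset (Finset (Fin n)))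
    {A A' : Fin n → Finset (Fin n)} {t t' : Fin n → Fin n}
    (hdest : ∀ x, dest A' t' (g x) = g (dest A t x)) :
    mergeMove (permPart g P) A' t' = permPart g (mergeMove P A t) := by
  have hblock (B : Finset (Fin n)) : (Finset.univ.filter fun x => dest A' t' x ∈ B.image g) =
      (Finset.univ.filter fun x => dest A t x ∈ B).image g := by
    ext x
    obtain ⟨y, rfl⟩ := g.surjective x
    simp [hdest, g.injective.mem_finset_image]
  simp only [mergeMove, permPart, Finset.image_erase (Finset.image_injective g.injective),
    Finset.image_empty, Finset.image_image, Function.comp_def, hblock]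

/-- Marked balls of index `≥ r` are dummies pinned by `saConfigs`, so `g` leaves them alone. -/
def permConfig (r : ℕ) (g : Equiv.Perm (Fin n))
    (c : (Fin n → Finset (Fin n)) × (Fin n → Fin n)) :
    (Fin n → Finset (Fin n)) × (Fin n → Fin n) :=
  (fun i => (c.1 i).image g, fun i => if (i : ℕ) < r then g (c.2 i) else c.2 i)

lemma permConfig_mul (r : ℕ) (g h : Equiv.Perm (Fin n))
    (c : (Fin n → Finset (Fin n)) × (Fin n → Fin n)) :
    permConfig r (g * h) c = permConfig r g (permConfig r h c) := by
  ext i : 2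
  · simp [permConfig, Finset.image_image, Function.comp_def]
  · by_cases hi : (i : ℕ) < r <;> simp [permConfig, hi]

lemma permConfig_one (r : ℕ) (c : (Fin n → Finset (Fin n)) × (Fin n → Fin n)) :
    permConfig r 1 c = c := by
  ext i : 2 <;> simp [permConfig]

def permConfigEquiv (r : ℕ) (g : Equiv.Perm (Fin n)) :
    (Fin n → Finset (Fin n)) × (Fin n → Fin n) ≃ (Fin n → Finset (Fin n)) × (Fin n → Fin n)
    where
  toFun := permConfig r g
  invFun := permConfig r g⁻¹
  left_inv c := by rw [← permConfig_mul, inv_mul_cancel, permConfig_one]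
  right_inv c := by rw [← permConfig_mul, mul_inv_cancel, permConfig_one]

variable (hn : 0 < n) (K : Multiset ℕ)

lemma permConfig_mem_saConfigs (g : Equiv.Perm (Fin n))
    {c : (Fin n → Finset (Fin n)) × (Fin n → Fin n)} (hc : c ∈ saConfigs n hn K) :
    permConfig (K.sort (· ≤ ·)).length g c ∈ saConfigs n hn K := by
  simp only [saConfigs, Finset.mem_filter, Finset.mem_univ, true_and] at hc ⊢
  obtain ⟨hcard, hdummy, hdisj, htinj, htout⟩ := hc
  refine ⟨fun i hi => ?_, fun i hi => ?_, fun i j hij => ?_, fun i j hi hj hij => ?_,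
    fun i hi j => ?_⟩
  · simpa [permConfig, Finset.card_image_of_injective _ g.injective] using hcard i hi
  · simp only [permConfig, if_neg (not_lt.mpr hi), hdummy i hi, Finset.image_empty, and_self]
  · exact (Finset.disjoint_image g.injective).mpr (hdisj i j hij)
  · simp only [permConfig, if_pos hi, if_pos hj, EmbeddingLike.apply_eq_iff_eq] at hij
    exact htinj i j hi hj hij
  · simp only [permConfig, if_pos hi, g.injective.mem_finset_image]
    exact htout i hi j

lemma mem_saConfigs_iff_permConfig_mem (g : Equiv.Perm (Fin n))
    (c : (Fin n → Finset (Fin n)) × (Fin n → Fin n)) :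
    c ∈ saConfigs n hn K ↔ permConfig (K.sort (· ≤ ·)).length g c ∈ saConfigs n hn K := by
  refine ⟨permConfig_mem_saConfigs hn K g, fun h => ?_⟩
  have hc := permConfig_mem_saConfigs hn K g⁻¹ h
  rwa [← permConfig_mul, inv_mul_cancel, permConfig_one] at hc

/-- Only the sampled sets of index `< r` are nonempty, and their marked balls are moved by `g`. -/
lemma dest_permConfig (g : Equiv.Perm (Fin n))
    {c : (Fin n → Finset (Fin n)) × (Fin n → Fin n)} (hc : c ∈ saConfigs n hn K) (x : Fin n) :
    dest (permConfig (K.sort (· ≤ ·)).length g c).1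
        (permConfig (K.sort (· ≤ ·)).length g c).2 (g x) = g (dest c.1 c.2 x) := by
  have hc' := permConfig_mem_saConfigs hn K g hc
  simp only [saConfigs, Finset.mem_filter, Finset.mem_univ, true_and] at hc hc'
  by_cases hx : ∃ i, x ∈ c.1 i
  · obtain ⟨i, hi⟩ := hx
    have hr : (i : ℕ) < (K.sort (· ≤ ·)).length := by
      by_contra hr
      simp [(hc.2.1 i (not_lt.mp hr)).1] at hi
    rw [dest_eq_of_mem hc.2.2.1 _ hi,
      dest_eq_of_mem hc'.2.2.1 _ (Finset.mem_image_of_mem g hi)]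
    simp only [permConfig, if_pos hr]
  · push Not at hx
    rw [dest_eq_self _ hx, dest_eq_self]
    simpa [permConfig, g.injective.mem_finset_image] using hx

lemma saT_permPart (q1n : ℝ) (qcn : Multiset ℕ → ℝ) (g : Equiv.Perm (Fin n))
    (P P' : Finset (Finset (Fin n))) :
    saT n hn q1n qcn (permPart g P) (permPart g P') = saT n hn q1n qcn P P' := by
  have hsingleton : (∑ b, if permPart g P' = addSingleton (permPart g P) b then 1 else 0 : ℝ)
      = ∑ b, if P' = addSingleton P b then 1 else 0 := by
    rw [← Equiv.sum_comp g]
    simp only [addSingleton_permPart, (permPart_injective g).eq_iff]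
  have hmerge (K : Multiset ℕ) :
      (∑ c ∈ saConfigs n hn K, if permPart g P' = mergeMove (permPart g P) c.1 c.2 then 1 else 0
        : ℝ) = ∑ c ∈ saConfigs n hn K, if P' = mergeMove P c.1 c.2 then 1 else 0 := by
    symm
    refine Finset.sum_equiv (permConfigEquiv (K.sort (· ≤ ·)).length g)
      (mem_saConfigs_iff_permConfig_mem hn K g) fun c hc => ?_
    simp only [permConfigEquiv, Equiv.coe_fn_mk, mergeMove_permPart P (dest_permConfig hn K g hc),
      (permPart_injective g).eq_iff]
  simp only [saT, hsingleton, hmerge]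

end SampleAndAdd

theorem sa_preserves_exchangeability_general (n : ℕ) (hn : 0 < n)
    (q1n : ℝ) (qcn : Multiset ℕ → ℝ)
    (μ : Finset (Finset (Fin n)) → ℝ)
    (hexch : ∀ (g : Equiv.Perm (Fin n)) (P : Finset (Finset (Fin n))),
      μ (permPart g P) = μ P) :
    ∀ (g : Equiv.Perm (Fin n)) (P' : Finset (Finset (Fin n))),
      (∑ P : Finset (Finset (Fin n)), μ P * saT n hn q1n qcn P (permPart g P')) =
        ∑ P : Finset (Finset (Fin n)), μ P * saT n hn q1n qcn P P' := by
  intro g P'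
  rw [← Equiv.sum_comp (permPartEquiv g)]
  simp only [permPartEquiv, Equiv.coe_fn_mk, hexch, saT_permPart]

/-- If `Π_n` is an exchangeable random partition of `[n]` (law `μ`
invariant under all permutations of `[n]`) and `Π_n'` is obtained from `Π_n` by one step of
the sample-and-add operation `SA_n`, then `Π_n'` is exchangeable. -/
theorem sa_preserves_exchangeability (n : ℕ) (hn : 0 < n)
    (q1n : ℝ) (qcn : Multiset ℕ → ℝ)
    (hq1 : 0 ≤ q1n) (hqc : ∀ K, 0 ≤ qcn K)
    (hsum : q1n + ∑ K ∈ collisionSets n, qcn K = 1)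
    (μ : Finset (Finset (Fin n)) → ℝ)
    (hμnn : ∀ P, 0 ≤ μ P)
    (hμsupp : ∀ P, ¬ IsPartitionOf n P → μ P = 0)
    (hμ1 : ∑ P ∈ Finset.univ.filter (fun P => IsPartitionOf n P), μ P = 1)
    (hexch : ∀ (g : Equiv.Perm (Fin n)) (P : Finset (Finset (Fin n))),
      μ (permPart g P) = μ P) :
    ∀ (g : Equiv.Perm (Fin n)) (P' : Finset (Finset (Fin n))),
      (∑ P : Finset (Finset (Fin n)), μ P * saT n hn q1n qcn P (permPart g P')) =
        ∑ P : Finset (Finset (Fin n)), μ P * saT n hn q1n qcn P P' :=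
  sa_preserves_exchangeability_general n hn q1n qcn μ hexch
end
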